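/- arXiv:1711.06107 — 5 statements merged into one kernel-verified Lean document; each statement's English description precedes it below -/
import Mathlib

section
/- It holds that ∫_0^∞ ∫_{-1}^{1} Δ(u, 1, s) du ds = 1. -/
open MeasureTheory ProbabilityTheory Real Filter Set Topology

noncomputable section

/-- Gaussian transition density of standard Brownian motion. -/
def gaussP (t x y : ℝ) : ℝ := (Real.sqrt (2 * π * t))⁻¹ * Real.exp (-(y - x) ^ 2 / (2 * t))

/-- The function `Δ(z,h,t)`. -/
def Delta (z h t : ℝ) : ℝ :=
  (Real.sqrt (2 * π * t))⁻¹ *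
    ∑' m : ℤ,
      (Real.exp (-(z + 4 * (m : ℝ) * h) ^ 2 / (2 * t)) -
        Real.exp (-(z + 2 * h * (2 * (m : ℝ) + 1)) ^ 2 / (2 * t)))

/-- The Kolmogorov distribution function. -/
def kolF (x : ℝ) : ℝ := ∑' m : ℤ, (-1 : ℝ) ^ m * Real.exp (-2 * (m : ℝ) ^ 2 * x ^ 2)

/-- The function `K(x,h,t)`. -/
def Kfun (x h t : ℝ) : ℝ :=
  ∑' m : ℤ, (-1 : ℝ) ^ m * Real.exp (-(2 * (m : ℝ) * h * ((m : ℝ) * h - x)) / t)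

/-- Transition density of the 3-dimensional Bessel process. -/
def besselR (t x y : ℝ) : ℝ := (y / x) * (gaussP t x y - gaussP t x (-y))

/-- A standard Brownian motion: starts at `0`, a.s. continuous paths, independent
Gaussian increments. -/
structure IsStandardBM {Ω : Type*} [MeasurableSpace Ω] (P : Measure Ω) (W : ℝ → Ω → ℝ) :
    Prop where
  meas : ∀ t, Measurable (W t)
  init : ∀ᵐ ω ∂P, W 0 ω = 0
  cont : ∀ᵐ ω ∂P, Continuous fun t => W t ω
  incr : ∀ s t : ℝ, 0 ≤ s → s ≤ t →
    P.map (fun ω => W t ω - W s ω) = gaussianReal 0 (Real.toNNReal (t - s))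
  indep : ∀ (n : ℕ) (ts : ℕ → ℝ), (∀ i, 0 ≤ ts i) → Monotone ts →
    iIndepFun
      (fun i : Fin n => fun ω => W (ts (i + 1)) ω - W (ts i) ω) P

/-- The Brownian bridge from `0` to `y` of length `T`, built pathwise from `W`. -/
def bbridge {Ω : Type*} (T y : ℝ) (W : ℝ → Ω → ℝ) (t : ℝ) (ω : Ω) : ℝ :=
  if t < T then (1 - t / T) * W (T * t / (T - t)) ω + y * t / T else y

/-- The first exit time from `(a,b)` before time `T` of the process `B`. -/
def exitTime {Ω : Type*} (T a b : ℝ) (B : ℝ → Ω → ℝ) (ω : Ω) : ℝ :=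
  sInf {t | t ∈ Set.Icc 0 T ∧ B t ω ∉ Set.Ioo a b}


namespace Stmt4Aux

open scoped ENNReal

lemma summable_gauss_int (c : ℝ) (hc : 0 < c) (d : ℝ) :
    Summable (fun n : ℤ => Real.exp (-c * (n:ℝ)^2 + d * (n:ℝ))) := by
  have hτ : (0:ℝ) < ((c/π) * Complex.I).im := by
    simp [Complex.mul_im, div_pos hc pi_pos]
  have h := (summable_jacobiTheta₂_term_iff (-(d/(2*π)) * Complex.I) ((c/π) * Complex.I)).mpr hτ
  have h2 := summable_norm_iff.mpr h
  refine h2.congr fun n => ?_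
  have hπ : (π:ℂ) ≠ 0 := Complex.ofReal_ne_zero.mpr pi_ne_zero
  have harg : 2 * (π:ℂ) * Complex.I * (n:ℂ) * (-(↑d/(2*↑π)) * Complex.I)
      + (π:ℂ) * Complex.I * (n:ℂ)^2 * ((↑c/↑π) * Complex.I)
      = ((-c * (n:ℝ)^2 + d * (n:ℝ) : ℝ) : ℂ) := by
    field_simp
    ring_nf
    rw [Complex.I_sq]
    push_cast; ring
  rw [jacobiTheta₂_term, harg, Complex.norm_exp, Complex.ofReal_re]

lemma summable_gauss1 (s x : ℝ) (hs : 0 < s) :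
    Summable (fun m : ℤ => Real.exp (-(x + 4*(m:ℝ))^2 / (2*s))) := by
  have h := (summable_gauss_int (8/s) (by positivity) (-4*x/s)).mul_left
    (Real.exp (-x^2/(2*s)))
  refine h.congr fun m => ?_
  rw [← Real.exp_add]
  congr 1
  field_simp
  ring

lemma summable_gauss0 (c : ℝ) (hc : 0 < c) :
    Summable (fun n : ℤ => Real.exp (-c * (n:ℝ)^2)) := by
  simpa using summable_gauss_int c hc 0

lemma summable_cos_side (s : ℝ) (hs : 0 < s) (g : ℤ → ℝ) (hg : ∀ n, |g n| ≤ 1) :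
    Summable (fun n : ℤ => Real.exp (-(π^2*(n:ℝ)^2*s)/8) * g n) := by
  refine Summable.of_norm_bounded (summable_gauss0 (π^2*s/8) (by positivity)) fun n => ?_
  rw [norm_mul, norm_of_nonneg (Real.exp_nonneg _)]
  calc Real.exp (-(π^2*(n:ℝ)^2*s)/8) * ‖g n‖ ≤ Real.exp (-(π^2*(n:ℝ)^2*s)/8) * 1 := by
        exact mul_le_mul_of_nonneg_left (by simpa [Real.norm_eq_abs] using hg n) (Real.exp_nonneg _)
    _ = Real.exp (-(π^2*s/8) * (n:ℝ)^2) := by rw [mul_one]; congr 1; ring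

lemma summable_cexp_side (s x : ℝ) (hs : 0 < s) :
    Summable (fun n : ℤ => (Real.exp (-(π^2*(n:ℝ)^2*s)/8) : ℂ)
      * Complex.exp ((π*(n:ℝ)*x/2 : ℝ) * Complex.I)) := by
  rw [← summable_norm_iff]
  refine Summable.of_norm_bounded (summable_gauss0 (π^2*s/8) (by positivity)) fun n => ?_
  simp only [norm_norm, norm_mul, Complex.norm_real,
    Complex.norm_exp_ofReal_mul_I, mul_one, Real.norm_eq_abs, Real.abs_exp]
  exact le_of_eq (by congr 1; ring)

lemma poisson (s x : ℝ) (hs : 0 < s) :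
    ∑' m : ℤ, Real.exp (-(x + 4*(m:ℝ))^2 / (2*s)) =
      Real.sqrt (π*s/8) * ∑' n : ℤ, Real.exp (-(π^2*(n:ℝ)^2*s)/8) * Real.cos (π*(n:ℝ)*x/2) := by
  have hπ : (π:ℂ) ≠ 0 := Complex.ofReal_ne_zero.mpr pi_ne_zero
  have hsC : (s:ℂ) ≠ 0 := Complex.ofReal_ne_zero.mpr hs.ne'
  have hA0 : (0:ℝ) < 8/(π*s) := by positivity
  have key := Complex.tsum_exp_neg_quadratic (a := ((8/(π*s) : ℝ):ℂ))
    (by rw [Complex.ofReal_re]; exact hA0) ((-2*x/(π*s) : ℝ):ℂ)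
  -- the inverse square root prefactor
  have hpre : 1 / ((8/(π*s) : ℝ):ℂ) ^ (1/2 : ℂ) = ((Real.sqrt (π*s/8) : ℝ) : ℂ) := by
    rw [show ((1:ℂ)/2) = ((1/2 : ℝ):ℂ) by norm_num, ← Complex.ofReal_cpow hA0.le]
    rw [← Complex.ofReal_one, ← Complex.ofReal_div]
    congr 1
    rw [← Real.sqrt_eq_rpow, one_div, ← Real.sqrt_inv, inv_div]
  -- complex main identity
  have step1 : ∀ m : ℤ, ((Real.exp (-(x + 4*(m:ℝ))^2 / (2*s)) : ℝ) : ℂ)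
      = Complex.exp ((-x^2/(2*s) : ℝ) : ℂ)
        * Complex.exp (-(π:ℂ) * ((8/(π*s) : ℝ):ℂ) * (m:ℂ)^2
            + 2*(π:ℂ)*((-2*x/(π*s) : ℝ):ℂ)*(m:ℂ)) := by
    intro m
    rw [Complex.ofReal_exp, ← Complex.exp_add]
    congr 1
    push_cast
    field_simp
    ring
  have step2 : ∀ n : ℤ, Complex.exp ((-x^2/(2*s) : ℝ) : ℂ)
      * Complex.exp (-(π:ℂ) / ((8/(π*s) : ℝ):ℂ)
          * ((n:ℂ) + Complex.I * ((-2*x/(π*s) : ℝ):ℂ))^2)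
      = ((Real.exp (-(π^2*(n:ℝ)^2*s)/8) : ℝ) : ℂ)
          * Complex.exp ((π*(n:ℝ)*x/2 : ℝ) * Complex.I) := by
    intro n
    rw [Complex.ofReal_exp, ← Complex.exp_add, ← Complex.exp_add]
    congr 1
    push_cast
    field_simp
    ring_nf
    rw [Complex.I_sq]
    ring
  have main : ((∑' m : ℤ, Real.exp (-(x + 4*(m:ℝ))^2 / (2*s)) : ℝ) : ℂ)
      = ((Real.sqrt (π*s/8) : ℝ) : ℂ) * ∑' n : ℤ,
        ((Real.exp (-(π^2*(n:ℝ)^2*s)/8) : ℝ) : ℂ)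
          * Complex.exp ((π*(n:ℝ)*x/2 : ℝ) * Complex.I) := by
    calc ((∑' m : ℤ, Real.exp (-(x + 4*(m:ℝ))^2 / (2*s)) : ℝ) : ℂ)
        = ∑' m : ℤ, ((Real.exp (-(x + 4*(m:ℝ))^2 / (2*s)) : ℝ) : ℂ) :=
          Complex.ofReal_tsum _
      _ = ∑' m : ℤ, Complex.exp ((-x^2/(2*s) : ℝ) : ℂ)
            * Complex.exp (-(π:ℂ) * ((8/(π*s) : ℝ):ℂ) * (m:ℂ)^2
                + 2*(π:ℂ)*((-2*x/(π*s) : ℝ):ℂ)*(m:ℂ)) := tsum_congr step1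
      _ = Complex.exp ((-x^2/(2*s) : ℝ) : ℂ)
            * ∑' m : ℤ, Complex.exp (-(π:ℂ) * ((8/(π*s) : ℝ):ℂ) * (m:ℂ)^2
                + 2*(π:ℂ)*((-2*x/(π*s) : ℝ):ℂ)*(m:ℂ)) := tsum_mul_left
      _ = Complex.exp ((-x^2/(2*s) : ℝ) : ℂ)
            * (1 / ((8/(π*s) : ℝ):ℂ) ^ (1/2 : ℂ) * ∑' n : ℤ,
                Complex.exp (-(π:ℂ) / ((8/(π*s) : ℝ):ℂ)
                  * ((n:ℂ) + Complex.I * ((-2*x/(π*s) : ℝ):ℂ))^2)) := by rw [key]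
      _ = ((Real.sqrt (π*s/8) : ℝ) : ℂ) * ∑' n : ℤ,
            (Complex.exp ((-x^2/(2*s) : ℝ) : ℂ)
              * Complex.exp (-(π:ℂ) / ((8/(π*s) : ℝ):ℂ)
                  * ((n:ℂ) + Complex.I * ((-2*x/(π*s) : ℝ):ℂ))^2)) := by
          rw [hpre, ← mul_assoc, mul_comm (Complex.exp ((-x^2/(2*s) : ℝ) : ℂ)), mul_assoc,
            ← tsum_mul_left]
      _ = ((Real.sqrt (π*s/8) : ℝ) : ℂ) * ∑' n : ℤ,
            ((Real.exp (-(π^2*(n:ℝ)^2*s)/8) : ℝ) : ℂ)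
              * Complex.exp ((π*(n:ℝ)*x/2 : ℝ) * Complex.I) := by
          rw [tsum_congr step2]
  have hre := congrArg Complex.re main
  rw [Complex.ofReal_re, Complex.re_ofReal_mul,
    Complex.re_tsum (summable_cexp_side s x hs)] at hre
  simp only [Complex.re_ofReal_mul, Complex.exp_ofReal_mul_I_re] at hre
  exact hre


private def oddInj (k : ℕ) : ℤ := if Even k then (k:ℤ)+1 else -(k:ℤ)

lemma oddInj_even (j : ℕ) : oddInj (2*j) = 2*(j:ℤ)+1 := by
  unfold oddInj
  rw [if_pos (even_two_mul j)]
  push_cast; ring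

lemma oddInj_odd (j : ℕ) : oddInj (2*j+1) = -(2*(j:ℤ)+1) := by
  unfold oddInj
  rw [if_neg (by simp [Nat.even_add_one])]
  push_cast; ring

lemma oddInj_injective : Function.Injective oddInj := by
  intro a b hab
  unfold oddInj at hab
  by_cases ha : Even a <;> by_cases hb : Even b <;>
    simp only [ha, hb, if_true, if_false, reduceIte] at hab <;> omega

lemma tsum_int_odd (f : ℤ → ℝ) (hz : ∀ n : ℤ, Even n → f n = 0)
    (hsym : ∀ n : ℤ, f (-n) = f n) (hs : Summable fun j : ℕ => f (2*(j:ℤ)+1)) :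
    ∑' n : ℤ, f n = 2 * ∑' j : ℕ, f (2*(j:ℤ)+1) := by
  have hsupp : Function.support f ⊆ Set.range oddInj := by
    intro n hn
    rcases Int.even_or_odd n with he | ho
    · exact absurd (hz n he) hn
    · obtain ⟨t, ht⟩ := ho
      rcases le_or_gt 0 t with h0 | h0
      · exact ⟨2*t.toNat, by rw [oddInj_even]; omega⟩
      · exact ⟨2*(-t-1).toNat+1, by rw [oddInj_odd]; omega⟩
  rw [← oddInj_injective.tsum_eq hsupp]
  have he : ∀ j : ℕ, f (oddInj (2*j)) = f (2*(j:ℤ)+1) := fun j => by rw [oddInj_even]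
  have ho : ∀ j : ℕ, f (oddInj (2*j+1)) = f (2*(j:ℤ)+1) := fun j => by
    rw [oddInj_odd, hsym]
  rw [← tsum_even_add_odd (hs.congr fun j => (he j).symm) (hs.congr fun j => (ho j).symm),
    tsum_congr he, tsum_congr ho]
  ring

lemma summable_spec (s : ℝ) (hs : 0 < s) (g : ℕ → ℝ) (hg : ∀ j, |g j| ≤ 1) :
    Summable (fun j : ℕ => Real.exp (-(π^2*(2*(j:ℝ)+1)^2*s)/8) * g j) := by
  set r := Real.exp (-(π^2*s)/8) with hr
  have hr0 : (0:ℝ) ≤ r := Real.exp_nonneg _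
  have hr1 : r < 1 := by
    rw [hr, Real.exp_lt_one_iff]
    have : (0:ℝ) < π^2*s := by positivity
    linarith
  refine Summable.of_norm_bounded (summable_geometric_of_lt_one hr0 hr1)
    fun j => ?_
  have hj : j ≤ (2*j+1)^2 := by nlinarith
  have h1 : Real.exp (-(π^2*(2*(j:ℝ)+1)^2*s)/8) = r ^ ((2*j+1)^2) := by
    rw [hr, ← Real.exp_nat_mul]
    congr 1
    push_cast
    ring
  rw [norm_mul, norm_of_nonneg (Real.exp_nonneg _)]
  calc Real.exp (-(π^2*(2*(j:ℝ)+1)^2*s)/8) * ‖g j‖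
      ≤ Real.exp (-(π^2*(2*(j:ℝ)+1)^2*s)/8) * 1 :=
        mul_le_mul_of_nonneg_left (by simpa [Real.norm_eq_abs] using hg j) (Real.exp_nonneg _)
    _ = r ^ ((2*j+1)^2) := by rw [mul_one, h1]
    _ ≤ r ^ j := pow_le_pow_of_le_one hr0 hr1.le hj


lemma delta_spectral (s u : ℝ) (hs : 0 < s) :
    Delta u 1 s = ∑' j : ℕ,
      Real.exp (-(π^2*(2*(j:ℝ)+1)^2*s)/8) * Real.cos (π*(2*(j:ℝ)+1)*u/2) := by
  have hpre : (Real.sqrt (2*π*s))⁻¹ * Real.sqrt (π*s/8) = 1/4 := by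
    rw [← Real.sqrt_inv, ← Real.sqrt_mul (by positivity)]
    rw [show (2*π*s)⁻¹ * (π*s/8) = (1/4)^2 by field_simp; ring]
    exact Real.sqrt_sq (by norm_num)
  have hc1 := summable_cos_side s hs (fun n => Real.cos (π*(n:ℝ)*u/2))
    (fun n => abs_cos_le_one _)
  have hc2 := summable_cos_side s hs (fun n => Real.cos (π*(n:ℝ)*(u+2)/2))
    (fun n => abs_cos_le_one _)
  have step1 : Delta u 1 s = ∑' n : ℤ, (1/4) *
      (Real.exp (-(π^2*(n:ℝ)^2*s)/8) * Real.cos (π*(n:ℝ)*u/2)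
        - Real.exp (-(π^2*(n:ℝ)^2*s)/8) * Real.cos (π*(n:ℝ)*(u+2)/2)) := by
    unfold Delta
    have h1 : ∀ m : ℤ, Real.exp (-(u + 4 * (m:ℝ) * 1)^2 / (2*s))
        - Real.exp (-(u + 2 * 1 * (2*(m:ℝ)+1))^2 / (2*s))
        = Real.exp (-(u + 4*(m:ℝ))^2 / (2*s)) - Real.exp (-((u+2) + 4*(m:ℝ))^2 / (2*s)) := by
      intro m
      rw [show u + 4*(m:ℝ)*1 = u + 4*(m:ℝ) by ring,
        show u + 2*1*(2*(m:ℝ)+1) = (u+2) + 4*(m:ℝ) by ring]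
    rw [tsum_congr h1, Summable.tsum_sub (summable_gauss1 s u hs) (summable_gauss1 s (u+2) hs),
      poisson s u hs, poisson s (u+2) hs, ← mul_sub, ← mul_assoc, hpre,
      ← Summable.tsum_sub hc1 hc2, ← tsum_mul_left]
  rw [step1]
  rw [tsum_int_odd _ ?_ ?_ ?_]
  · rw [← tsum_mul_left]
    apply tsum_congr
    intro j
    have hcosu : Real.cos (π*((2*(j:ℤ)+1 : ℤ):ℝ)*u/2) = Real.cos (π*(2*(j:ℝ)+1)*u/2) := by
      norm_num
    have hcosu2 : Real.cos (π*((2*(j:ℤ)+1 : ℤ):ℝ)*(u+2)/2)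
        = -Real.cos (π*(2*(j:ℝ)+1)*u/2) := by
      push_cast
      rw [show π*(2*(j:ℝ)+1)*(u+2)/2 = (π*(2*(j:ℝ)+1)*u/2 + π) + (j:ℕ)*(2*π) by push_cast; ring,
        Real.cos_add_nat_mul_two_pi, Real.cos_add_pi]
    have hexp : (-(π^2*((2*(j:ℤ)+1 : ℤ):ℝ)^2*s)/8) = (-(π^2*(2*(j:ℝ)+1)^2*s)/8) := by
      norm_num
    rw [hexp, hcosu, hcosu2]
    ring
  · rintro n ⟨t, rfl⟩
    have h1 : π*((t+t : ℤ):ℝ)*(u+2)/2 = π*((t+t : ℤ):ℝ)*u/2 + (t:ℤ)*(2*π) := by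
      push_cast; ring
    rw [h1, Real.cos_add_int_mul_two_pi]
    ring
  · intro n
    have e1 : ((-n : ℤ):ℝ) = -(n:ℝ) := by push_cast; ring
    rw [e1, show π*(-(n:ℝ))*u/2 = -(π*(n:ℝ)*u/2) by ring,
      show π*(-(n:ℝ))*(u+2)/2 = -(π*(n:ℝ)*(u+2)/2) by ring,
      show (-(n:ℝ))^2 = (n:ℝ)^2 by ring, Real.cos_neg, Real.cos_neg]
  · refine Summable.of_norm_bounded
      ((summable_spec s hs (fun _ => (1:ℝ)) (fun _ => by norm_num)).mul_left (1/2 : ℝ))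
      fun j => ?_
    have hE : ((2*(j:ℤ)+1 : ℤ):ℝ) = 2*(j:ℝ)+1 := by push_cast; ring
    rw [hE, Real.norm_eq_abs, ← mul_sub, abs_mul, abs_mul,
      abs_of_nonneg (Real.exp_nonneg _)]
    have h1 := abs_cos_le_one (π*(2*(j:ℝ)+1)*u/2)
    have h2 := abs_cos_le_one (π*(2*(j:ℝ)+1)*(u+2)/2)
    have h3 : |Real.cos (π*(2*(j:ℝ)+1)*u/2) - Real.cos (π*(2*(j:ℝ)+1)*(u+2)/2)| ≤ 2 :=
      (abs_sub _ _).trans (by linarith)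
    have h4 : (0:ℝ) ≤ Real.exp (-(π^2*(2*(j:ℝ)+1)^2*s)/8) := Real.exp_nonneg _
    rw [abs_of_nonneg (by norm_num : (0:ℝ) ≤ 1/4)]
    nlinarith


lemma inner_int (s : ℝ) (hs : 0 < s) :
    ∫ u in (-1:ℝ)..1, Delta u 1 s
      = ∑' j : ℕ, Real.exp (-(π^2*(2*(j:ℝ)+1)^2*s)/8)
          * (4/(π*(2*(j:ℝ)+1)) * Real.sin (π*(2*(j:ℝ)+1)/2)) := by
  rw [intervalIntegral.integral_of_le (by norm_num : (-1:ℝ) ≤ 1)]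
  rw [setIntegral_congr_fun measurableSet_Ioc (fun u _ => delta_spectral s u hs)]
  rw [MeasureTheory.integral_tsum ?meas ?fin]
  case meas =>
    intro j
    exact (Continuous.aestronglyMeasurable (by fun_prop))
  case fin =>
    have hsum : Summable (fun j : ℕ => 2 * (Real.exp (-(π^2*(2*(j:ℝ)+1)^2*s)/8) * 1)) :=
      (summable_spec s hs (fun _ => 1) (fun _ => by norm_num)).mul_left 2
    refine ne_top_of_lt (b := ⊤) (lt_of_le_of_lt (ENNReal.tsum_le_tsum
      (g := fun j : ℕ => ENNReal.ofReal (2 * (Real.exp (-(π^2*(2*(j:ℝ)+1)^2*s)/8) * 1)))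
      fun j => ?_) ?_)
    · show ∫⁻ u in Ioc (-1:ℝ) 1,
          (‖Real.exp (-(π^2*(2*(j:ℝ)+1)^2*s)/8) * Real.cos (π*(2*(j:ℝ)+1)*u/2)‖₊ : ℝ≥0∞)
        ≤ ENNReal.ofReal (2 * (Real.exp (-(π^2*(2*(j:ℝ)+1)^2*s)/8) * 1))
      have hb : ∀ u : ℝ,
          (‖Real.exp (-(π^2*(2*(j:ℝ)+1)^2*s)/8) * Real.cos (π*(2*(j:ℝ)+1)*u/2)‖₊ : ℝ≥0∞)
            ≤ ENNReal.ofReal (Real.exp (-(π^2*(2*(j:ℝ)+1)^2*s)/8)) := by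
        intro u
        rw [← enorm_eq_nnnorm, ← ofReal_norm]
        refine ENNReal.ofReal_le_ofReal ?_
        rw [Real.norm_eq_abs, abs_mul, abs_of_nonneg (Real.exp_nonneg _)]
        have := abs_cos_le_one (π*(2*(j:ℝ)+1)*u/2)
        nlinarith [Real.exp_nonneg (-(π^2*(2*(j:ℝ)+1)^2*s)/8)]
      calc ∫⁻ u in Ioc (-1:ℝ) 1,
            (‖Real.exp (-(π^2*(2*(j:ℝ)+1)^2*s)/8) * Real.cos (π*(2*(j:ℝ)+1)*u/2)‖₊ : ℝ≥0∞)
          ≤ ∫⁻ _ in Ioc (-1:ℝ) 1,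
              ENNReal.ofReal (Real.exp (-(π^2*(2*(j:ℝ)+1)^2*s)/8)) := lintegral_mono hb
        _ = ENNReal.ofReal (Real.exp (-(π^2*(2*(j:ℝ)+1)^2*s)/8)) * volume (Ioc (-1:ℝ) 1) :=
            setLIntegral_const _ _
        _ = ENNReal.ofReal (2 * (Real.exp (-(π^2*(2*(j:ℝ)+1)^2*s)/8) * 1)) := by
            rw [Real.volume_Ioc, show (1:ℝ) - (-1) = 2 by norm_num,
              ← ENNReal.ofReal_mul (Real.exp_nonneg _)]
            ring_nf
    · rw [← ENNReal.ofReal_tsum_of_nonneg (fun j => by positivity) hsum]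
      exact ENNReal.ofReal_lt_top
  apply tsum_congr
  intro j
  have hc : (0:ℝ) < π*(2*(j:ℝ)+1)/2 := by positivity
  rw [MeasureTheory.integral_const_mul]
  congr 1
  rw [← intervalIntegral.integral_of_le (by norm_num : (-1:ℝ) ≤ 1)]
  have harg : ∀ u : ℝ, π*(2*(j:ℝ)+1)*u/2 = (π*(2*(j:ℝ)+1)/2)*u := fun u => by ring
  simp_rw [harg]
  rw [intervalIntegral.integral_comp_mul_left (fun x => Real.cos x) hc.ne']
  rw [integral_cos]
  rw [mul_neg_one, mul_one, Real.sin_neg, smul_eq_mul]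
  field_simp
  ring

lemma integral_exp_neg (c : ℝ) (hc : 0 < c) :
    ∫ s in Ioi (0:ℝ), Real.exp (-(c*s)) = 1/c := by
  have h := integral_comp_mul_left_Ioi (fun x => Real.exp (-x)) 0 hc
  simp only [mul_zero] at h
  rw [h, integral_exp_neg_Ioi, neg_zero, Real.exp_zero, smul_eq_mul, mul_one, one_div]

lemma hexp_arg (j : ℕ) : ∀ s : ℝ, -(π^2*(2*(j:ℝ)+1)^2*s)/8 = -((π^2*(2*(j:ℝ)+1)^2/8)*s) :=
  fun s => by ring

lemma hc_pos (j : ℕ) : (0:ℝ) < π^2*(2*(j:ℝ)+1)^2/8 := by positivity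

lemma integrable_term (j : ℕ) (C : ℝ) :
    IntegrableOn (fun s : ℝ => Real.exp (-(π^2*(2*(j:ℝ)+1)^2*s)/8) * C) (Ioi 0) := by
  have h := (exp_neg_integrableOn_Ioi 0 (hc_pos j)).mul_const C
  refine MeasureTheory.IntegrableOn.congr_fun h (fun s _ => ?_) measurableSet_Ioi
  rw [show -(π^2*(2*(j:ℝ)+1)^2/8)*s = -(π^2*(2*(j:ℝ)+1)^2*s)/8 by ring]

lemma term_integral (j : ℕ) (C : ℝ) :
    ∫ s in Ioi (0:ℝ), Real.exp (-(π^2*(2*(j:ℝ)+1)^2*s)/8) * C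
      = (8/(π^2*(2*(j:ℝ)+1)^2)) * C := by
  rw [MeasureTheory.integral_mul_const]
  simp_rw [hexp_arg j]
  rw [integral_exp_neg _ (hc_pos j)]
  have h3 : (2*(j:ℝ)+1) ≠ 0 := by positivity
  have h2 : (π:ℝ) ≠ 0 := pi_ne_zero
  field_simp

lemma summable_basel : Summable (fun j : ℕ => (32/π^3) * (1/(2*(j:ℝ)+1)^2)) := by
  apply Summable.mul_left
  have h2 : Summable (fun n : ℕ => 1/((n:ℝ)+1)^2) := by
    have := (summable_nat_add_iff 1).mpr (Real.summable_one_div_nat_pow.mpr one_lt_two)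
    refine this.congr fun n => ?_
    push_cast
    ring
  refine Summable.of_nonneg_of_le (fun j => by positivity) (fun j => ?_) h2
  have hle : ((j:ℝ)+1)^2 ≤ (2*(j:ℝ)+1)^2 := by nlinarith [Nat.cast_nonneg (α := ℝ) j]
  exact one_div_le_one_div_of_le (by positivity) hle


end Stmt4Aux

open Stmt4Aux in
/-- `∫_0^∞ ∫_{-1}^{1} Δ(u, 1, s) du ds = 1`. -/
theorem stmt_4 : ∫ s in Set.Ioi (0 : ℝ), ∫ u in (-1 : ℝ)..1, Delta u 1 s = 1 := by
  rw [MeasureTheory.setIntegral_congr_fun measurableSet_Ioi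
    (fun s (hs : s ∈ Ioi 0) => inner_int s hs)]
  rw [MeasureTheory.integral_tsum ?meas ?fin]
  case meas =>
    intro j
    exact Continuous.aestronglyMeasurable (by fun_prop)
  case fin =>
    refine ne_top_of_lt (b := ⊤) (lt_of_le_of_lt (le_of_eq (tsum_congr fun j =>
      (ofReal_integral_norm_eq_lintegral_enorm (integrable_term j _)).symm)) ?_)
    refine lt_of_le_of_lt (ENNReal.tsum_le_tsum
      (g := fun j : ℕ => ENNReal.ofReal ((32/π^3) * (1/(2*(j:ℝ)+1)^2))) fun j => ?_) ?_
    · refine ENNReal.ofReal_le_ofReal ?_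
      have hnrm : ∀ s : ℝ, ‖Real.exp (-(π^2*(2*(j:ℝ)+1)^2*s)/8)
          * (4/(π*(2*(j:ℝ)+1)) * Real.sin (π*(2*(j:ℝ)+1)/2))‖
          = Real.exp (-(π^2*(2*(j:ℝ)+1)^2*s)/8)
            * |4/(π*(2*(j:ℝ)+1)) * Real.sin (π*(2*(j:ℝ)+1)/2)| := by
        intro s
        rw [Real.norm_eq_abs, abs_mul, abs_of_nonneg (Real.exp_nonneg _)]
      calc ∫ s in Ioi (0:ℝ), ‖Real.exp (-(π^2*(2*(j:ℝ)+1)^2*s)/8)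
            * (4/(π*(2*(j:ℝ)+1)) * Real.sin (π*(2*(j:ℝ)+1)/2))‖
          = (8/(π^2*(2*(j:ℝ)+1)^2))
              * |4/(π*(2*(j:ℝ)+1)) * Real.sin (π*(2*(j:ℝ)+1)/2)| := by
            rw [setIntegral_congr_fun measurableSet_Ioi (fun s _ => hnrm s)]
            exact term_integral j _
        _ ≤ (32/π^3) * (1/(2*(j:ℝ)+1)^2) := by
            have h1 : |4/(π*(2*(j:ℝ)+1)) * Real.sin (π*(2*(j:ℝ)+1)/2)|
                ≤ 4/(π*(2*(j:ℝ)+1)) := by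
              rw [abs_mul, abs_of_nonneg (by positivity : (0:ℝ) ≤ 4/(π*(2*(j:ℝ)+1)))]
              have := abs_sin_le_one (π*(2*(j:ℝ)+1)/2)
              nlinarith [div_nonneg (by norm_num : (0:ℝ) ≤ 4)
                (by positivity : (0:ℝ) ≤ π*(2*(j:ℝ)+1))]
            have h2 : (0:ℝ) < π := pi_pos
            have h3 : (0:ℝ) < 2*(j:ℝ)+1 := by positivity
            calc (8/(π^2*(2*(j:ℝ)+1)^2)) * |4/(π*(2*(j:ℝ)+1)) * Real.sin (π*(2*(j:ℝ)+1)/2)|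
                ≤ (8/(π^2*(2*(j:ℝ)+1)^2)) * (4/(π*(2*(j:ℝ)+1))) := by
                  refine mul_le_mul_of_nonneg_left h1 (by positivity)
              _ = (32/π^3) * (1/(2*(j:ℝ)+1)^2) * (1/(2*(j:ℝ)+1)) := by
                  have h4 : (2*(j:ℝ)+1) ≠ 0 := h3.ne'
                  have h5 : (π:ℝ) ≠ 0 := pi_ne_zero
                  field_simp
                  ring
              _ ≤ (32/π^3) * (1/(2*(j:ℝ)+1)^2) := by
                  refine mul_le_of_le_one_right (by positivity) ?_
                  rw [div_le_one h3]
                  linarith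
    · rw [← ENNReal.ofReal_tsum_of_nonneg (fun j => by positivity) summable_basel]
      exact ENNReal.ofReal_lt_top
  -- final evaluation of the sum
  have hinj2 : Function.Injective (fun j : ℕ => 2*j+1) := fun a b h => by have h' : 2*a+1 = 2*b+1 := h; omega
  have hvan : ∀ n ∉ Set.range (fun j : ℕ => 2*j+1),
      (1/(n:ℝ)^3 * Real.sin (π*(n:ℝ)/2)) = 0 := by
    intro n hn
    rcases Nat.even_or_odd n with he | ho
    · obtain ⟨t, rfl⟩ := he
      rw [show π*((t+t:ℕ):ℝ)/2 = (t:ℕ)*π by push_cast; ring, Real.sin_nat_mul_pi, mul_zero]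
    · obtain ⟨k, hk⟩ := ho
      exact absurd ⟨k, show 2*k+1 = n by omega⟩ hn
  have h1 := (Function.Injective.hasSum_iff hinj2 hvan).mpr
    hasSum_L_function_mod_four_eval_three
  have hfun : ((fun n : ℕ => 1/(n:ℝ)^3 * Real.sin (π*(n:ℝ)/2)) ∘ (fun j : ℕ => 2*j+1))
      = fun j : ℕ => 1/(2*(j:ℝ)+1)^3 * Real.sin (π*(2*(j:ℝ)+1)/2) := by
    funext j
    simp only [Function.comp_apply]
    push_cast
    ring_nf
  rw [hfun] at h1
  have hsum_val : ∑' j : ℕ, (1/(2*(j:ℝ)+1)^3 * Real.sin (π*(2*(j:ℝ)+1)/2)) = π^3/32 :=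
    h1.tsum_eq
  have hπ : (π:ℝ) ≠ 0 := pi_ne_zero
  calc ∑' j : ℕ, ∫ s in Ioi (0:ℝ), Real.exp (-(π^2*(2*(j:ℝ)+1)^2*s)/8)
          * (4/(π*(2*(j:ℝ)+1)) * Real.sin (π*(2*(j:ℝ)+1)/2))
      = ∑' j : ℕ, (8/(π^2*(2*(j:ℝ)+1)^2))
          * (4/(π*(2*(j:ℝ)+1)) * Real.sin (π*(2*(j:ℝ)+1)/2)) :=
        tsum_congr fun j => term_integral j _
    _ = ∑' j : ℕ, (32/π^3) * (1/(2*(j:ℝ)+1)^3 * Real.sin (π*(2*(j:ℝ)+1)/2)) := by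
        refine tsum_congr fun j => ?_
        have h3 : (2*(j:ℝ)+1) ≠ 0 := by positivity
        field_simp
        ring
    _ = (32/π^3) * ∑' j : ℕ, (1/(2*(j:ℝ)+1)^3 * Real.sin (π*(2*(j:ℝ)+1)/2)) := tsum_mul_left
    _ = 1 := by
        rw [hsum_val]
        field_simp
end
end

section
/- For every x > 0, Σ_{m∈ℤ} (−1)^m exp(−2m²x²) = (√(2π)/x) · Σ_{k=1}^∞ exp( −(2k−1)²π² / (8x²) ). -/
open MeasureTheory ProbabilityTheory Real Filter Set Topology

noncomputable section

lemma aux_summable {c : ℝ} (hc : 0 < c) {u : ℕ → ℝ} (hu : ∀ n : ℕ, (n : ℝ) ≤ u n) :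
    Summable fun n : ℕ ↦ Real.exp (-c * u n) := by
  refine Summable.of_nonneg_of_le (fun n => (Real.exp_nonneg _)) (fun n => ?_)
    (summable_exp_nat_mul_iff.mpr (neg_lt_zero.mpr hc))
  exact Real.exp_le_exp.mpr (by nlinarith [hu n])

/-- the Jacobi theta / Poisson summation identity for the Kolmogorov
distribution function. -/
theorem stmt_8 (x : ℝ) (hx : 0 < x) :
    ∑' m : ℤ, (-1 : ℝ) ^ m * Real.exp (-2 * (m : ℝ) ^ 2 * x ^ 2) =
      (Real.sqrt (2 * π) / x) *
        ∑' k : ℕ, Real.exp (-(2 * (k : ℝ) + 1) ^ 2 * π ^ 2 / (8 * x ^ 2)) := by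
  have hπ := Real.pi_pos
  set a : ℝ := 2 * x ^ 2 / π with ha_def
  have ha : 0 < a := by positivity
  set c : ℝ := π ^ 2 / (2 * x ^ 2) with hc_def
  have hc : 0 < c := by positivity
  have key := Complex.tsum_exp_neg_quadratic (a := (a : ℂ))
    (by simpa using ha) (Complex.I / 2)
  -- LHS terms
  have hL : ∀ n : ℤ, Complex.exp (-(π:ℂ) * (a:ℂ) * (n:ℂ) ^ 2 + 2 * π * (Complex.I / 2) * n)
      = (((-1 : ℝ) ^ n * Real.exp (-2 * (n : ℝ) ^ 2 * x ^ 2) : ℝ) : ℂ) := by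
    intro n
    have h1 : (-(π:ℂ) * (a:ℂ) * (n:ℂ) ^ 2 + 2 * π * (Complex.I / 2) * n)
        = ((-2 * (n : ℝ) ^ 2 * x ^ 2 : ℝ) : ℂ) + n * (π * Complex.I) := by
      have hπ' : (π : ℂ) ≠ 0 := by exact_mod_cast hπ.ne'
      push_cast [ha_def]
      field_simp
    rw [h1, Complex.exp_add, Complex.exp_int_mul, Complex.exp_pi_mul_I]
    push_cast
    ring
  -- RHS terms
  have hR : ∀ n : ℤ, Complex.exp (-(π:ℂ) / (a:ℂ) * ((n:ℂ) + Complex.I * (Complex.I / 2)) ^ 2)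
      = ((Real.exp (-c * ((n : ℝ) - 1/2) ^ 2) : ℝ) : ℂ) := by
    intro n
    have h1 : (-(π:ℂ) / (a:ℂ) * ((n:ℂ) + Complex.I * (Complex.I / 2)) ^ 2)
        = ((-c * ((n : ℝ) - 1/2) ^ 2 : ℝ) : ℂ) := by
      have hπ' : (π : ℂ) ≠ 0 := by exact_mod_cast hπ.ne'
      have hx' : (x : ℂ) ≠ 0 := by exact_mod_cast hx.ne'
      have hI : Complex.I * (Complex.I / 2) = -(1/2 : ℂ) := by
        rw [mul_div_assoc', Complex.I_mul_I]; norm_num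
      rw [hI]
      push_cast [ha_def, hc_def]
      field_simp
      ring
    rw [h1, Complex.ofReal_exp]
  have hpow : (1 : ℂ) / (a : ℂ) ^ (1/2 : ℂ) = ((1 / Real.sqrt a : ℝ) : ℂ) := by
    rw [show (1/2 : ℂ) = ((1/2 : ℝ) : ℂ) by norm_num, ← Complex.ofReal_cpow ha.le,
      ← Real.sqrt_eq_rpow]
    push_cast
    ring
  rw [tsum_congr hL, tsum_congr hR, hpow, ← Complex.ofReal_tsum, ← Complex.ofReal_tsum,
    ← Complex.ofReal_mul] at key
  have key' : ∑' m : ℤ, (-1 : ℝ) ^ m * Real.exp (-2 * (m : ℝ) ^ 2 * x ^ 2)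
      = (1 / Real.sqrt a) * ∑' n : ℤ, Real.exp (-c * ((n : ℝ) - 1/2) ^ 2) :=
    Complex.ofReal_inj.mp key
  -- reindex the ℤ-sum
  set φ : ℕ → ℝ := fun k => Real.exp (-(2 * (k : ℝ) + 1) ^ 2 * π ^ 2 / (8 * x ^ 2)) with hφ_def
  have hφsum : Summable φ := by
    have := aux_summable (c := π ^ 2 / (8 * x ^ 2)) (by positivity)
      (u := fun k : ℕ => (2 * (k : ℝ) + 1) ^ 2) (fun n : ℕ => by show (n:ℝ) ≤ (2*(n:ℝ)+1)^2; nlinarith [Nat.cast_nonneg (α := ℝ) n])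
    refine this.congr fun k => ?_
    rw [hφ_def]
    congr 1
    ring
  set g : ℤ → ℝ := fun n => Real.exp (-c * ((n : ℝ) - 1/2) ^ 2) with hg_def
  have hg1 : ∀ n : ℕ, g (n + 1) = φ n := by
    intro n
    simp only [hg_def, hφ_def]
    congr 1
    push_cast
    rw [hc_def]
    field_simp
    ring
  have hg2 : ∀ n : ℕ, g (-(n + 1)) = φ (n + 1) := by
    intro n
    simp only [hg_def, hφ_def]
    congr 1
    push_cast
    rw [hc_def]
    field_simp
    ring
  have hg0 : g 0 = φ 0 := by
    simp only [hg_def, hφ_def]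
    congr 1
    push_cast
    rw [hc_def]
    field_simp
    ring
  have hs1 : Summable fun n : ℕ => g (n + 1) := (funext hg1 ▸ hφsum : _)
  have hs2 : Summable fun n : ℕ => g (-(n + 1)) :=
    (funext hg2 ▸ (hφsum.comp_injective (add_left_injective 1)) : _)
  have hgsum : ∑' n : ℤ, g n = 2 * ∑' k, φ k := by
    rw [tsum_of_add_one_of_neg_add_one hs1 hs2, tsum_congr hg1, tsum_congr hg2, hg0,
      Summable.tsum_eq_zero_add hφsum]
    ring
  rw [key', hgsum]
  -- final constant computation
  have hsq : Real.sqrt (2 * π) * Real.sqrt a = 2 * x := by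
    rw [← Real.sqrt_mul (by positivity), show 2 * π * a = (2 * x) ^ 2 by
      rw [ha_def]; field_simp]
    exact Real.sqrt_sq (by positivity)
  have hsa : Real.sqrt a ≠ 0 := (Real.sqrt_pos.mpr ha).ne'
  have hdiv : Real.sqrt (2 * π) / x = 2 / Real.sqrt a := by
    rw [div_eq_div_iff hx.ne' hsa]
    exact hsq
  rw [hdiv]
  ring
end
end

section
/- For every h > 0 and γ > 0, the Laplace transform identity ∫_0^∞ e^{−γt} · F(h/√t)/(h√(2πt)) dt = tanh(h√(2γ)) / (h√(2γ)) holds. -/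
open MeasureTheory ProbabilityTheory Real Filter Set Topology

noncomputable section

/-! ### Auxiliary lemmas -/


private lemma w_hasDeriv (b c : ℝ) {u : ℝ} (hu : 0 < u) :
    HasDerivAt (fun u : ℝ => b * u - c / u) (b + c / u ^ 2) u := by
  have h1 : HasDerivAt (fun u : ℝ => b * u) b u := by
    simpa using (hasDerivAt_id u).const_mul b
  have h2 : HasDerivAt (fun u : ℝ => c / u) (-c / u ^ 2) u := by
    simpa [div_eq_mul_inv] using (hasDerivAt_inv (ne_of_gt hu)).const_mul c
  have := h1.sub h2
  exact this.congr_deriv (by ring)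

private lemma w_injOn (b c : ℝ) (hb : 0 < b) (hc : 0 ≤ c) :
    InjOn (fun u : ℝ => b * u - c / u) (Ioi 0) := by
  have : StrictMonoOn (fun u : ℝ => b * u - c / u) (Ioi 0) := by
    apply strictMonoOn_of_deriv_pos (convex_Ioi 0)
    · apply ContinuousOn.sub (continuousOn_const.mul continuousOn_id)
      exact continuousOn_const.div continuousOn_id fun x hx => ne_of_gt hx
    · intro x hx
      rw [interior_Ioi] at hx
      rw [(w_hasDeriv b c hx).deriv]
      have h2 : 0 ≤ c / x ^ 2 := div_nonneg hc (by positivity)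
      linarith
  exact this.injOn

private lemma w_image (b c : ℝ) (hb : 0 < b) (hc : 0 < c) :
    (fun u : ℝ => b * u - c / u) '' Ioi 0 = univ := by
  apply eq_univ_of_forall
  intro y
  set s := Real.sqrt (y ^ 2 + 4 * b * c) with hs
  have hs2 : s ^ 2 = y ^ 2 + 4 * b * c := Real.sq_sqrt (by positivity)
  have hsy : |y| < s := by
    have h : |y| = Real.sqrt (y ^ 2) := (Real.sqrt_sq_eq_abs y).symm
    rw [h, hs]
    exact Real.sqrt_lt_sqrt (by positivity) (by nlinarith)
  have hys : 0 < y + s := by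
    have : -y < s := lt_of_le_of_lt (neg_le_abs y) hsy
    linarith
  have hu : 0 < (y + s) / (2 * b) := by positivity
  refine ⟨(y + s) / (2 * b), hu, ?_⟩
  have h2b : (2 * b) ≠ 0 := by positivity
  have hys' : y + s ≠ 0 := ne_of_gt hys
  field_simp
  nlinarith [hs2]

private lemma glasser_integrable (b c : ℝ) (hb : 0 < b) (hc : 0 ≤ c) :
    IntegrableOn (fun u : ℝ => Real.exp (-(b * u - c / u) ^ 2)) (Ioi 0) := by
  rcases eq_or_lt_of_le hc with rfl | hc
  · have : IntegrableOn (fun u : ℝ => Real.exp (-(b ^ 2) * u ^ 2)) (Ioi 0) :=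
      (integrable_exp_neg_mul_sq (by positivity)).integrableOn
    refine this.congr_fun (fun u hu => by ring_nf) measurableSet_Ioi
  · have key := (integrableOn_image_iff_integrableOn_abs_deriv_smul measurableSet_Ioi
      (fun x hx => (w_hasDeriv b c hx).hasDerivWithinAt) (w_injOn b c hb hc.le)
      (fun x => Real.exp (-x ^ 2))).mp ?_
    · refine Integrable.mono' (key.const_mul b⁻¹) ?_ ?_
      · apply Measurable.aestronglyMeasurable
        fun_prop
      · filter_upwards [ae_restrict_mem measurableSet_Ioi] with u hu
        have hu0 : (0:ℝ) < u := hu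
        have h1 : 0 < b + c / u ^ 2 := by positivity
        rw [norm_eq_abs, abs_exp, smul_eq_mul, abs_of_pos h1]
        rw [mul_comm b⁻¹, mul_assoc]
        have : (1:ℝ) ≤ b⁻¹ * (b + c / u ^ 2) := by
          rw [inv_mul_eq_div, le_div_iff₀ hb, one_mul]
          have : 0 ≤ c / u ^ 2 := by positivity
          linarith
        nlinarith [Real.exp_pos (-(b * u - c / u) ^ 2), this]
    · rw [w_image b c hb hc, integrableOn_univ]
      simpa using integrable_exp_neg_mul_sq (one_pos)

private lemma phi_hasDeriv (b c : ℝ) (hb : 0 < b) {u : ℝ} (hu : 0 < u) :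
    HasDerivAt (fun u : ℝ => c / (b * u)) (-(c / b) / u ^ 2) u := by
  have heq : (fun u : ℝ => c / (b * u)) = fun u : ℝ => (c / b) * u⁻¹ := by
    funext u; rw [← div_div, div_eq_mul_inv]
  rw [heq]
  have := (hasDerivAt_inv (ne_of_gt hu)).const_mul (c / b)
  exact this.congr_deriv (by ring)

private lemma phi_image (b c : ℝ) (hb : 0 < b) (hc : 0 < c) :
    (fun u : ℝ => c / (b * u)) '' Ioi 0 = Ioi 0 := by
  apply Subset.antisymm
  · rintro _ ⟨u, hu, rfl⟩
    have : (0:ℝ) < u := hu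
    exact div_pos hc (by positivity)
  · intro y hy
    have hy0 : (0:ℝ) < y := hy
    refine ⟨c / (b * y), mem_Ioi.mpr (by positivity), ?_⟩
    field_simp

private lemma phi_injOn (b c : ℝ) (hb : 0 < b) (hc : 0 < c) :
    InjOn (fun u : ℝ => c / (b * u)) (Ioi 0) := by
  intro u hu v hv e
  have hu0 : (0:ℝ) < u := hu
  have hv0 : (0:ℝ) < v := hv
  simp only at e
  rw [div_eq_div_iff (by positivity) (by positivity)] at e
  have hcb : (c * b : ℝ) ≠ 0 := by positivity
  exact mul_left_cancel₀ hcb (by linear_combination -e)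

private lemma glasser (b c : ℝ) (hb : 0 < b) (hc : 0 ≤ c) :
    ∫ u in Ioi (0:ℝ), Real.exp (-(b * u - c / u) ^ 2) = Real.sqrt π / (2 * b) := by
  rcases eq_or_lt_of_le hc with rfl | hc
  · rw [setIntegral_congr_fun measurableSet_Ioi
      (g := fun u : ℝ => Real.exp (-(b ^ 2) * u ^ 2)) (fun u hu => by ring_nf)]
    rw [integral_gaussian_Ioi, Real.sqrt_div pi_pos.le, Real.sqrt_sq hb.le]
    rw [div_div]; ring_nf
  · set g₀ : ℝ → ℝ := fun u => Real.exp (-(b * u - c / u) ^ 2) with hg₀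
    have J_int : IntegrableOn g₀ (Ioi 0) := glasser_integrable b c hb hc.le
    have key := integral_image_eq_integral_abs_deriv_smul measurableSet_Ioi
      (fun x hx => (w_hasDeriv b c hx).hasDerivWithinAt) (w_injOn b c hb hc.le)
      (fun x => Real.exp (-x ^ 2))
    rw [w_image b c hb hc, Measure.restrict_univ] at key
    have hgauss : (∫ x : ℝ, Real.exp (-x ^ 2)) = Real.sqrt π := by
      simpa using integral_gaussian 1
    rw [hgauss] at key
    have key2 := integral_image_eq_integral_abs_deriv_smul measurableSet_Ioi
      (fun x (hx : x ∈ Ioi (0:ℝ)) => (phi_hasDeriv b c hb hx).hasDerivWithinAt)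
      (phi_injOn b c hb hc) g₀
    rw [phi_image b c hb hc] at key2
    have harg : ∀ u : ℝ, 0 < u →
        g₀ (c / (b * u)) = g₀ u := by
      intro u hu
      have h1 : b * (c / (b * u)) - c / (c / (b * u)) = -(b * u - c / u) := by
        field_simp
        ring
      simp only [hg₀, h1]
      ring_nf
    have habs : ∀ u : ℝ, 0 < u → |(-(c / b) / u ^ 2)| = (c / b) / u ^ 2 := by
      intro u hu
      rw [neg_div, abs_neg, abs_of_pos (by positivity)]
    have E2 : ∫ u in Ioi (0:ℝ), g₀ u = ∫ u in Ioi (0:ℝ), (c / b) / u ^ 2 * g₀ u := by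
      rw [key2]
      refine setIntegral_congr_fun measurableSet_Ioi (fun u hu => ?_)
      have hu0 : (0:ℝ) < u := hu
      rw [smul_eq_mul, habs u hu0, harg u hu0]
    have I2 : IntegrableOn (fun u : ℝ => (c / b) / u ^ 2 * g₀ u) (Ioi 0) := by
      have := (integrableOn_image_iff_integrableOn_abs_deriv_smul measurableSet_Ioi
        (fun x (hx : x ∈ Ioi (0:ℝ)) => (phi_hasDeriv b c hb hx).hasDerivWithinAt)
        (phi_injOn b c hb hc) g₀).mp (by rw [phi_image b c hb hc]; exact J_int)
      refine this.congr_fun (fun u hu => ?_) measurableSet_Ioi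
      have hu0 : (0:ℝ) < u := hu
      beta_reduce
      rw [smul_eq_mul, habs u hu0, harg u hu0]
    have hsplit : ∫ u in Ioi (0:ℝ), |b + c / u ^ 2| • Real.exp (-(b * u - c / u) ^ 2)
        = (∫ u in Ioi (0:ℝ), b * g₀ u) + ∫ u in Ioi (0:ℝ), b * ((c / b) / u ^ 2 * g₀ u) := by
      rw [← integral_add (J_int.const_mul b) (I2.const_mul b)]
      refine setIntegral_congr_fun measurableSet_Ioi (fun u hu => ?_)
      have hu0 : (0:ℝ) < u := hu
      have hpos : 0 < b + c / u ^ 2 := by positivity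
      rw [smul_eq_mul, abs_of_pos hpos]
      simp only [hg₀]
      have hcb : b * ((c / b) / u ^ 2) = c / u ^ 2 := by field_simp
      rw [show b * ((c / b) / u ^ 2 * Real.exp (-(b * u - c / u) ^ 2))
          = (b * ((c / b) / u ^ 2)) * Real.exp (-(b * u - c / u) ^ 2) by ring, hcb]
      ring
    rw [hsplit, integral_const_mul, integral_const_mul, ← E2] at key
    have hJ : Real.sqrt π = 2 * b * ∫ u in Ioi (0:ℝ), g₀ u := by
      rw [key]; ring
    simp only [hg₀] at hJ
    simp only [hg₀]
    rw [eq_div_iff (by positivity : (2 * b : ℝ) ≠ 0)]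
    linear_combination -hJ

private lemma sq_hasDeriv {u : ℝ} : HasDerivAt (fun u : ℝ => u ^ 2) (2 * u) u := by
  simpa using hasDerivAt_pow 2 u

private lemma sq_injOn : InjOn (fun u : ℝ => u ^ 2) (Ioi 0) := by
  intro u hu v hv e
  have hu0 : (0:ℝ) < u := hu
  have hv0 : (0:ℝ) < v := hv
  simp only at e
  have h3 : (u - v) * (u + v) = 0 := by linear_combination e
  rcases mul_eq_zero.mp h3 with h | h
  · linarith
  · linarith

private lemma sq_image : (fun u : ℝ => u ^ 2) '' Ioi 0 = Ioi 0 := by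
  apply Subset.antisymm
  · rintro _ ⟨u, hu, rfl⟩
    have : (0:ℝ) < u := hu
    exact mem_Ioi.mpr (by positivity)
  · intro y hy
    have hy0 : (0:ℝ) < y := hy
    exact ⟨Real.sqrt y, mem_Ioi.mpr (Real.sqrt_pos.mpr hy0), Real.sq_sqrt hy0.le⟩

private lemma exp_arg_eq (γ a : ℝ) (hγ : 0 < γ) (ha : 0 ≤ a) {u : ℝ} (hu : 0 < u) :
    -γ * u ^ 2 - a / u ^ 2 =
      -(Real.sqrt γ * u - Real.sqrt a / u) ^ 2 - 2 * Real.sqrt (a * γ) := by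
  have h1 : Real.sqrt γ ^ 2 = γ := Real.sq_sqrt hγ.le
  have h2 : Real.sqrt a ^ 2 = a := Real.sq_sqrt ha
  have h3 : Real.sqrt (a * γ) = Real.sqrt a * Real.sqrt γ := Real.sqrt_mul ha γ
  have hu' : u ≠ 0 := ne_of_gt hu
  rw [h3]
  field_simp
  linear_combination (u ^ 4) * h1 + h2

private lemma hpt (γ a : ℝ) (hγ : 0 < γ) (ha : 0 ≤ a) : ∀ u : ℝ, u ∈ Ioi (0:ℝ) →
    |2 * u| • (Real.exp (-γ * u ^ 2 - a / u ^ 2) / Real.sqrt (u ^ 2)) =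
    2 * (Real.exp (-2 * Real.sqrt (a * γ)) *
      Real.exp (-(Real.sqrt γ * u - Real.sqrt a / u) ^ 2)) := by
  intro u hu
  have hu0 : (0:ℝ) < u := hu
  rw [smul_eq_mul, abs_of_pos (by positivity), Real.sqrt_sq hu0.le,
    exp_arg_eq γ a hγ ha hu0, sub_eq_add_neg, Real.exp_add]
  field_simp

private lemma laplace_eq (γ a : ℝ) (hγ : 0 < γ) (ha : 0 ≤ a) :
    ∫ t in Ioi (0:ℝ), Real.exp (-γ * t - a / t) / Real.sqrt t =
      Real.sqrt (π / γ) * Real.exp (-2 * Real.sqrt (a * γ)) := by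
  have key := integral_image_eq_integral_abs_deriv_smul measurableSet_Ioi
    (fun x (hx : x ∈ Ioi (0:ℝ)) => sq_hasDeriv.hasDerivWithinAt) sq_injOn
    (fun t => Real.exp (-γ * t - a / t) / Real.sqrt t)
  rw [sq_image] at key
  rw [key]
  rw [setIntegral_congr_fun measurableSet_Ioi (hpt γ a hγ ha)]
  rw [integral_const_mul, integral_const_mul,
    glasser (Real.sqrt γ) (Real.sqrt a) (Real.sqrt_pos.mpr hγ) (Real.sqrt_nonneg a)]
  rw [Real.sqrt_div pi_pos.le]
  field_simp

private lemma laplace_integrable (γ a : ℝ) (hγ : 0 < γ) (ha : 0 ≤ a) :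
    IntegrableOn (fun t : ℝ => Real.exp (-γ * t - a / t) / Real.sqrt t) (Ioi 0) := by
  rw [show Ioi (0:ℝ) = (fun u : ℝ => u ^ 2) '' Ioi 0 from sq_image.symm]
  rw [integrableOn_image_iff_integrableOn_abs_deriv_smul measurableSet_Ioi
    (fun x (hx : x ∈ Ioi (0:ℝ)) => sq_hasDeriv.hasDerivWithinAt) sq_injOn]
  have : IntegrableOn (fun u : ℝ => 2 * (Real.exp (-2 * Real.sqrt (a * γ)) *
      Real.exp (-(Real.sqrt γ * u - Real.sqrt a / u) ^ 2))) (Ioi 0) :=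
    ((glasser_integrable (Real.sqrt γ) (Real.sqrt a) (Real.sqrt_pos.mpr hγ)
      (Real.sqrt_nonneg a)).const_mul _).const_mul 2
  exact this.congr_fun (fun u hu => (hpt γ a hγ ha u hu).symm) measurableSet_Ioi

private lemma neg_one_zpow_eq (m : ℤ) : (-1 : ℝ) ^ m = (-1 : ℝ) ^ m.natAbs := by
  cases m with
  | ofNat n => simp [zpow_natCast]
  | negSucc n =>
      rw [zpow_negSucc, Int.natAbs_negSucc, ← inv_pow, inv_neg, inv_one]

private lemma hasSum_int_pow (x : ℝ) (hx : |x| < 1) :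
    HasSum (fun m : ℤ => x ^ m.natAbs) ((1 - x)⁻¹ + x * (1 - x)⁻¹) := by
  have hgeom : HasSum (fun n : ℕ => x ^ n) (1 - x)⁻¹ :=
    hasSum_geometric_of_norm_lt_one (by rwa [Real.norm_eq_abs])
  have h1 : HasSum (fun n : ℕ => x ^ ((n : ℤ).natAbs)) ((1 - x)⁻¹) := by
    simpa using hgeom
  have h2 : HasSum (fun n : ℕ => x ^ ((-((n : ℤ) + 1)).natAbs)) (x * (1 - x)⁻¹) := by
    have := hgeom.mul_left x
    have heq : (fun n : ℕ => x ^ ((-((n : ℤ) + 1)).natAbs)) = fun n : ℕ => x * x ^ n := by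
      funext n
      have : (-((n : ℤ) + 1)).natAbs = n + 1 := by
        rw [Int.natAbs_neg]
        exact_mod_cast Int.natAbs_natCast (n + 1)
      rw [this, pow_succ]
      ring
    rw [heq]
    exact this
  exact HasSum.of_nat_of_neg_add_one h1 h2


/-- the Laplace transform of `t ↦ F(h/√t)/(h√(2πt))`. -/
theorem stmt_9 (h γ : ℝ) (hh : 0 < h) (hγ : 0 < γ) :
    ∫ t in Set.Ioi (0 : ℝ),
        Real.exp (-γ * t) * (kolF (h / Real.sqrt t) / (h * Real.sqrt (2 * π * t))) =
      Real.tanh (h * Real.sqrt (2 * γ)) / (h * Real.sqrt (2 * γ)) := by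
  set K := h * Real.sqrt (2 * γ) with hK
  have hK0 : 0 < K := by
    rw [hK]; positivity
  set r := Real.exp (-(2 * K)) with hr
  have hr0 : 0 < r := Real.exp_pos _
  have hr1 : r < 1 := Real.exp_lt_one_iff.mpr (by linarith)
  -- terms of the series
  set term : ℤ → ℝ → ℝ := fun m t =>
    ((-1:ℝ) ^ m * Real.exp (-(2 * (m:ℝ) ^ 2 * h ^ 2) / t)) *
      (Real.exp (-γ * t) / (h * Real.sqrt (2 * π * t))) with hterm
  have ha : ∀ m : ℤ, (0:ℝ) ≤ 2 * (m:ℝ) ^ 2 * h ^ 2 := fun m => by positivity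
  -- rewrite `term` in Laplace form, on `Ioi 0`
  have term_eq : ∀ m : ℤ, ∀ t ∈ Ioi (0:ℝ), term m t =
      (-1:ℝ) ^ m * ((h * Real.sqrt (2 * π))⁻¹ *
        (Real.exp (-γ * t - (2 * (m:ℝ) ^ 2 * h ^ 2) / t) / Real.sqrt t)) := by
    intro m t ht
    have ht0 : (0:ℝ) < t := ht
    have hst : Real.sqrt t ≠ 0 := ne_of_gt (Real.sqrt_pos.mpr ht0)
    have hs2 : Real.sqrt (2 * π) ≠ 0 := by positivity
    rw [hterm]
    simp only
    rw [Real.sqrt_mul (by positivity : (0:ℝ) ≤ 2 * π) t,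
      show -γ * t - (2 * (m:ℝ) ^ 2 * h ^ 2) / t
        = (-γ * t) + (-(2 * (m:ℝ) ^ 2 * h ^ 2)) / t by ring,
      Real.exp_add]
    field_simp
  -- value of the base integral
  have sqrt_aγ : ∀ m : ℤ, Real.sqrt ((2 * (m:ℝ) ^ 2 * h ^ 2) * γ) = |(m:ℝ)| * K := by
    intro m
    rw [show (2 * (m:ℝ) ^ 2 * h ^ 2) * γ = ((m:ℝ) * h) ^ 2 * (2 * γ) by ring,
      Real.sqrt_mul (sq_nonneg _), Real.sqrt_sq_eq_abs, abs_mul, abs_of_pos hh, hK]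
    ring
  have const_eq : (h * Real.sqrt (2 * π))⁻¹ * Real.sqrt (π / γ) = K⁻¹ := by
    have h2 : Real.sqrt (2 * π) = Real.sqrt 2 * Real.sqrt π := Real.sqrt_mul (by norm_num) π
    have h3 : Real.sqrt (2 * γ) = Real.sqrt 2 * Real.sqrt γ := Real.sqrt_mul (by norm_num) γ
    have h4 : Real.sqrt (π / γ) = Real.sqrt π / Real.sqrt γ := Real.sqrt_div pi_pos.le γ
    have hπ : Real.sqrt π ≠ 0 := by positivity
    have hγ' : Real.sqrt γ ≠ 0 := by positivity
    have h2' : Real.sqrt 2 ≠ 0 := by positivity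
    rw [hK, h2, h3, h4]
    field_simp
  have base : ∀ m : ℤ, (∫ t in Ioi (0:ℝ),
      (h * Real.sqrt (2 * π))⁻¹ *
        (Real.exp (-γ * t - (2 * (m:ℝ) ^ 2 * h ^ 2) / t) / Real.sqrt t))
      = r ^ m.natAbs / K := by
    intro m
    rw [integral_const_mul, laplace_eq γ _ hγ (ha m), sqrt_aγ m, ← mul_assoc, const_eq]
    have habs : |(m:ℝ)| = (m.natAbs : ℝ) := by
      rw [Nat.cast_natAbs, Int.cast_abs]
    have : -2 * (|(m:ℝ)| * K) = ((m.natAbs : ℝ)) * (-(2 * K)) := by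
      rw [habs]; ring
    rw [this, Real.exp_nat_mul, ← hr, inv_mul_eq_div]
  -- integrability of each term
  have hint : ∀ m : ℤ, IntegrableOn (term m) (Ioi 0) := by
    intro m
    have h5 : IntegrableOn (fun t : ℝ => (-1:ℝ) ^ m * ((h * Real.sqrt (2 * π))⁻¹ *
        (Real.exp (-γ * t - (2 * (m:ℝ) ^ 2 * h ^ 2) / t) / Real.sqrt t))) (Ioi 0) :=
      ((laplace_integrable γ _ hγ (ha m)).const_mul
        ((h * Real.sqrt (2 * π))⁻¹)).const_mul ((-1:ℝ) ^ m)
    exact h5.congr_fun (fun t ht => (term_eq m t ht).symm) measurableSet_Ioi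
  -- value of each term integral
  have valm : ∀ m : ℤ, (∫ t in Ioi (0:ℝ), term m t) = (-1:ℝ) ^ m * r ^ m.natAbs / K := by
    intro m
    rw [setIntegral_congr_fun measurableSet_Ioi (term_eq m), integral_const_mul, base m]
    ring
  -- norm of each term integral
  have normm : ∀ m : ℤ, (∫ t in Ioi (0:ℝ), ‖term m t‖) = r ^ m.natAbs / K := by
    intro m
    have : ∀ t ∈ Ioi (0:ℝ), ‖term m t‖ =
        (h * Real.sqrt (2 * π))⁻¹ *
          (Real.exp (-γ * t - (2 * (m:ℝ) ^ 2 * h ^ 2) / t) / Real.sqrt t) := by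
      intro t ht
      have ht0 : (0:ℝ) < t := ht
      rw [term_eq m t ht, norm_mul, norm_zpow, norm_neg, norm_one, one_zpow, one_mul,
        norm_eq_abs, abs_of_pos]
      positivity
    rw [setIntegral_congr_fun measurableSet_Ioi this, base m]
  -- lintegral bound
  have hlint : (∑' m : ℤ, ∫⁻ t, ‖term m t‖₊ ∂(volume.restrict (Ioi 0))) ≠ ⊤ := by
    have heach : ∀ m : ℤ, (∫⁻ t, ‖term m t‖₊ ∂(volume.restrict (Ioi 0)))
        = ENNReal.ofReal (r ^ m.natAbs / K) := by
      intro m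
      rw [show (∫⁻ t, (‖term m t‖₊ : ENNReal) ∂(volume.restrict (Ioi 0))) = ∫⁻ t, ‖term m t‖ₑ ∂(volume.restrict (Ioi 0)) from rfl, ← ofReal_integral_norm_eq_lintegral_enorm (hint m), normm m]
    rw [tsum_congr heach]
    have hsummable : Summable (fun m : ℤ => r ^ m.natAbs / K) :=
      ((hasSum_int_pow r (by rwa [abs_of_pos hr0])).div_const K).summable
    rw [← ENNReal.ofReal_tsum_of_nonneg (fun m => by positivity) hsummable]
    exact ENNReal.ofReal_ne_top
  -- pointwise expansion of the integrand
  have expand : ∀ t ∈ Ioi (0:ℝ),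
      Real.exp (-γ * t) * (kolF (h / Real.sqrt t) / (h * Real.sqrt (2 * π * t)))
        = ∑' m : ℤ, term m t := by
    intro t ht
    have ht0 : (0:ℝ) < t := ht
    have hk : kolF (h / Real.sqrt t)
        = ∑' m : ℤ, (-1:ℝ) ^ m * Real.exp (-(2 * (m:ℝ) ^ 2 * h ^ 2) / t) := by
      rw [kolF]
      refine tsum_congr fun m => ?_
      congr 1
      rw [div_pow, Real.sq_sqrt ht0.le]
      ring
    calc Real.exp (-γ * t) * (kolF (h / Real.sqrt t) / (h * Real.sqrt (2 * π * t)))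
        = (∑' m : ℤ, (-1:ℝ) ^ m * Real.exp (-(2 * (m:ℝ) ^ 2 * h ^ 2) / t)) *
            (Real.exp (-γ * t) / (h * Real.sqrt (2 * π * t))) := by rw [hk]; ring
      _ = ∑' m : ℤ, term m t := by
          rw [hterm, ← tsum_mul_right]
  -- put it all together
  rw [setIntegral_congr_fun measurableSet_Ioi expand]
  rw [integral_tsum (fun m => (hint m).aestronglyMeasurable) hlint]
  rw [tsum_congr valm]
  -- evaluate the sum
  have hsum : HasSum (fun m : ℤ => (-1:ℝ) ^ m * r ^ m.natAbs / K)
      (((1 - (-r))⁻¹ + (-r) * (1 - (-r))⁻¹) / K) := by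
    have h0 := (hasSum_int_pow (-r) (by rwa [abs_neg, abs_of_pos hr0])).div_const K
    have heq : (fun m : ℤ => (-r:ℝ) ^ m.natAbs / K)
        = fun m : ℤ => (-1:ℝ) ^ m * r ^ m.natAbs / K := by
      funext m
      rw [neg_pow, ← neg_one_zpow_eq]
    rwa [heq] at h0
  rw [hsum.tsum_eq]
  have hE : Real.exp K ≠ 0 := (Real.exp_pos K).ne'
  have h1r : (1:ℝ) + r ≠ 0 := by positivity
  have htanh : Real.tanh K = (1 - r) / (1 + r) := by
    rw [Real.tanh_eq_sinh_div_cosh, Real.sinh_eq, Real.cosh_eq]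
    have hEK : Real.exp (-K) = (Real.exp K)⁻¹ := Real.exp_neg K
    have hrK : r = (Real.exp K)⁻¹ * (Real.exp K)⁻¹ := by
      rw [hr, show -(2 * K) = -K + -K by ring, Real.exp_add, hEK]
    have hpos : 0 < Real.exp K := Real.exp_pos K
    have hden1 : (0:ℝ) < Real.exp K + (Real.exp K)⁻¹ := by positivity
    have hden2 : (0:ℝ) < 1 + (Real.exp K)⁻¹ * (Real.exp K)⁻¹ := by positivity
    rw [hEK, hrK, div_div_div_cancel_right₀,
      div_eq_div_iff (ne_of_gt hden1) (ne_of_gt hden2)]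
    · linear_combination (2 * (Real.exp K)⁻¹) * (mul_inv_cancel₀ hE)
    · norm_num
  have hnum : ((1 - -r)⁻¹ + -r * (1 - -r)⁻¹ : ℝ) = (1 - r) / (1 + r) := by
    rw [sub_neg_eq_add]
    field_simp
    ring
  rw [hnum, htanh]
end
end

section
/- Let h > 0, γ > 0 and y ≥ h. Then ∫_{-h}^{h} ( (2γ)^{−1/2} e^{−√(2γ)|y−x|} ) · ( (2γ)^{−1/2} ( e^{−√(2γ)|x|} + ( e^{√(2γ)x} + e^{−√(2γ)x} ) Σ_{m=1}^∞ (−1)^m e^{−2mh√(2γ)} ) ) dx = (h/(2γ)) · e^{−√(2γ)y} · tanh(h√(2γ)). (Here (2γ)^{−1/2} e^{−√(2γ)|y−x|} is the Laplace transform in t of p_t(x,y), and the second factor is the Laplace transform in t of K(x,h,t)·p_t(0,x).) -/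
open MeasureTheory ProbabilityTheory Real Filter Set Topology

noncomputable section

lemma exp_antideriv (c : ℝ) (hc : c ≠ 0) (P Q a b : ℝ) :
    ∫ x in a..b, (P * Real.exp (2*c*x) + Q) =
      (P * Real.exp (2*c*b)/(2*c) + Q*b) - (P * Real.exp (2*c*a)/(2*c) + Q*a) := by
  have key : ∫ x in a..b, (P * Real.exp (2*c*x) + Q) =
      (fun x => P * Real.exp (2*c*x)/(2*c) + Q*x) b -
      (fun x => P * Real.exp (2*c*x)/(2*c) + Q*x) a := by
    apply intervalIntegral.integral_eq_sub_of_hasDerivAt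
    · intro x hx
      have h1 : HasDerivAt (fun x : ℝ => Real.exp (2*c*x)) (Real.exp (2*c*x) * (2*c)) x := by
        simpa using ((hasDerivAt_id x).const_mul (2*c)).exp
      have h4 : HasDerivAt (fun x => P * Real.exp (2*c*x) / (2*c) + Q * x)
          (P * (Real.exp (2*c*x) * (2*c)) / (2*c) + Q * 1) x :=
        ((h1.const_mul P).div_const (2*c)).add ((hasDerivAt_id x).const_mul Q)
      exact h4.congr_deriv (by rw [mul_div_assoc, mul_div_cancel_right₀ _ (mul_ne_zero two_ne_zero hc)]; ring)
    · apply Continuous.intervalIntegrable; continuity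
  rw [key]

/-- the product of the two Laplace transforms integrates over `(-h,h)`
to `(h/(2γ)) e^{-√(2γ)y} tanh(h√(2γ))`. -/
theorem stmt_11 (h γ y : ℝ) (hh : 0 < h) (hγ : 0 < γ) (hy : h ≤ y) :
    ∫ x in (-h : ℝ)..h,
        ((Real.sqrt (2 * γ))⁻¹ * Real.exp (-Real.sqrt (2 * γ) * |y - x|)) *
          ((Real.sqrt (2 * γ))⁻¹ *
            (Real.exp (-Real.sqrt (2 * γ) * |x|) +
              (Real.exp (Real.sqrt (2 * γ) * x) + Real.exp (-Real.sqrt (2 * γ) * x)) *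
                ∑' m : ℕ, (-1 : ℝ) ^ (m + 1) *
                  Real.exp (-2 * ((m : ℝ) + 1) * h * Real.sqrt (2 * γ)))) =
      (h / (2 * γ)) * Real.exp (-Real.sqrt (2 * γ) * y) *
        Real.tanh (h * Real.sqrt (2 * γ)) := by
  set c := Real.sqrt (2 * γ) with hcdef
  have hc : 0 < c := Real.sqrt_pos.mpr (by positivity)
  have hcsq : c * c = 2 * γ := Real.mul_self_sqrt (by positivity)
  have hcne : c ≠ 0 := ne_of_gt hc
  set r := Real.exp (-(2*h*c)) with hrdef
  have hr0 : 0 < r := Real.exp_pos _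
  have hr1 : r < 1 := by
    rw [hrdef, ← Real.exp_zero]
    exact Real.exp_lt_exp.mpr (by nlinarith)
  have h1r : (1:ℝ) + r ≠ 0 := by positivity
  -- the geometric sum
  have htsum : (∑' m : ℕ, (-1 : ℝ) ^ (m + 1) * Real.exp (-2 * ((m : ℝ) + 1) * h * c))
      = -r/(1+r) := by
    have habs : ‖(-r)‖ < 1 := by rw [norm_neg, Real.norm_eq_abs, abs_of_pos hr0]; exact hr1
    have hterm : ∀ m : ℕ, (-1 : ℝ) ^ (m + 1) * Real.exp (-2 * ((m : ℝ) + 1) * h * c)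
        = (-r) * (-r)^m := by
      intro m
      have : (-2 : ℝ) * ((m : ℝ) + 1) * h * c = ((m+1 : ℕ) : ℝ) * (-(2*h*c)) := by
        push_cast; ring
      rw [this, Real.exp_nat_mul, ← hrdef]
      rw [neg_pow, neg_pow]

      ring
    rw [tsum_congr hterm, tsum_mul_left, tsum_geometric_of_norm_lt_one habs]
    field_simp
    rw [sub_neg_eq_add, div_self h1r]
  rw [htsum]
  set S : ℝ := -r/(1+r) with hSdef
  set P₁ : ℝ := c⁻¹*c⁻¹*Real.exp (-(c*y))*(1+S) with hP1
  set Q₁ : ℝ := c⁻¹*c⁻¹*Real.exp (-(c*y))*S with hQ1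
  -- integrand
  set F : ℝ → ℝ := fun x =>
      (c⁻¹ * Real.exp (-c * |y - x|)) *
        (c⁻¹ * (Real.exp (-c * |x|) + (Real.exp (c * x) + Real.exp (-c * x)) * S)) with hF
  have hFcont : Continuous F := by
    apply Continuous.mul
    · exact continuous_const.mul (Real.continuous_exp.comp (by continuity))
    · apply continuous_const.mul
      apply Continuous.add
      · exact Real.continuous_exp.comp (by continuity)
      · exact Continuous.mul (by continuity) continuous_const
  have hsplit : (∫ x in (-h : ℝ)..h, F x) = (∫ x in (-h : ℝ)..(0:ℝ), F x) + ∫ x in (0:ℝ)..h, F x :=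
    (intervalIntegral.integral_add_adjacent_intervals
      (hFcont.intervalIntegrable _ _) (hFcont.intervalIntegrable _ _)).symm
  have hexp3 : ∀ x : ℝ, Real.exp (c*x) * Real.exp (-(c*x)) = 1 := by
    intro x; rw [← Real.exp_add]; simp
  have hI1 : (∫ x in (-h : ℝ)..(0:ℝ), F x) = ∫ x in (-h : ℝ)..(0:ℝ), (P₁ * Real.exp (2*c*x) + Q₁) := by
    apply intervalIntegral.integral_congr
    intro x hx
    rw [Set.uIcc_of_le (by linarith : (-h:ℝ) ≤ 0)] at hx
    obtain ⟨hx1, hx2⟩ := hx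
    have hyx : |y - x| = y - x := abs_of_nonneg (by linarith)
    have hxx : |x| = -x := abs_of_nonpos hx2
    simp only [hF]
    rw [hyx, hxx]
    have e1 : Real.exp (-c * (y - x)) = Real.exp (-(c*y)) * Real.exp (c*x) := by
      rw [← Real.exp_add]; ring_nf
    have e2 : Real.exp (2*c*x) = Real.exp (c*x) * Real.exp (c*x) := by
      rw [← Real.exp_add]; ring_nf
    have e4 : Real.exp (-c * -x) = Real.exp (c*x) := by ring_nf
    have e5 : Real.exp (-c * x) = Real.exp (-(c*x)) := by ring_nf
    rw [e1, e2, e4, e5, hP1, hQ1]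
    linear_combination (c⁻¹*c⁻¹*Real.exp (-(c*y))*S) * hexp3 x
  set P₂ : ℝ := c⁻¹*c⁻¹*Real.exp (-(c*y))*S with hP2
  set Q₂ : ℝ := c⁻¹*c⁻¹*Real.exp (-(c*y))*(1+S) with hQ2
  have hI2 : (∫ x in (0:ℝ)..h, F x) = ∫ x in (0:ℝ)..h, (P₂ * Real.exp (2*c*x) + Q₂) := by
    apply intervalIntegral.integral_congr
    intro x hx
    rw [Set.uIcc_of_le (le_of_lt hh)] at hx
    obtain ⟨hx1, hx2⟩ := hx
    have hyx : |y - x| = y - x := abs_of_nonneg (by linarith)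
    have hxx : |x| = x := abs_of_nonneg hx1
    simp only [hF]
    rw [hyx, hxx]
    have e1 : Real.exp (-c * (y - x)) = Real.exp (-(c*y)) * Real.exp (c*x) := by
      rw [← Real.exp_add]; ring_nf
    have e2 : Real.exp (2*c*x) = Real.exp (c*x) * Real.exp (c*x) := by
      rw [← Real.exp_add]; ring_nf
    have e5 : Real.exp (-c * x) = Real.exp (-(c*x)) := by ring_nf
    rw [e1, e2, e5, hP2, hQ2]
    linear_combination (c⁻¹*c⁻¹*Real.exp (-(c*y))*(1+S)) * hexp3 x
  have hEy : Real.exp (-c * y) = Real.exp (-(c*y)) := by ring_nf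
  rw [show (∫ x in (-h : ℝ)..h,
        ((c)⁻¹ * Real.exp (-c * |y - x|)) *
          ((c)⁻¹ *
            (Real.exp (-c * |x|) +
              (Real.exp (c * x) + Real.exp (-c * x)) * S))) = ∫ x in (-h : ℝ)..h, F x from rfl,
    hsplit, hI1, hI2, exp_antideriv c hcne, exp_antideriv c hcne]
  -- now pure algebra
  have hEh : Real.exp (2*c*(-h)) = r := by rw [hrdef]; ring_nf
  have hE0 : Real.exp (2*c*(0:ℝ)) = 1 := by norm_num
  have hE2h : Real.exp (2*c*h) = Real.exp (h*c) * Real.exp (h*c) := by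
    rw [← Real.exp_add]; ring_nf
  have hrE : r = (Real.exp (h*c))⁻¹ * (Real.exp (h*c))⁻¹ := by
    rw [hrdef, ← Real.exp_neg, ← Real.exp_add]; ring_nf
  have hEpos : (0:ℝ) < Real.exp (h*c) := Real.exp_pos _
  have hEne : Real.exp (h*c) ≠ 0 := ne_of_gt hEpos
  rw [hEh, hE0, hE2h, Real.tanh_eq_sinh_div_cosh, Real.sinh_eq, Real.cosh_eq, Real.exp_neg,
    hEy, hP1, hQ1, hP2, hQ2, hSdef]
  rw [hrE] at h1r ⊢
  rw [← hcsq]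
  have hden : Real.exp (h*c) + (Real.exp (h*c))⁻¹ ≠ 0 := by positivity
  field_simp
  ring
end
end

section
/- For every h > 0, the function t ↦ F(h/√t)/(h√(2πt)) is a probability density on (0,∞); that is, it is nonnegative and ∫_0^∞ F(h/√t)/(h√(2πt)) dt = 1. (It is the density of the last passage time at 0 of a Brownian motion killed at its first exit from (−h,h).) -/
open MeasureTheory ProbabilityTheory Real Filter Set Topology

noncomputable section

lemma sum_nat_sq_inv : Summable (fun n : ℕ => ((n : ℝ) ^ 2)⁻¹) := by
  simpa using Real.summable_one_div_nat_pow.mpr one_lt_two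

lemma summable_oddsq_nat : Summable (fun k : ℕ => ((2*(k:ℝ)+1) ^ 2)⁻¹) := by
  have := sum_nat_sq_inv.comp_injective (i := fun k : ℕ => 2*k+1)
    (fun a b hab => by dsimp at hab; omega)
  refine this.congr fun k => ?_
  simp only [Function.comp_apply]; push_cast; ring_nf

lemma hasSum_oddsq : HasSum (fun k : ℕ => ((2*(k:ℝ)+1) ^ 2)⁻¹) (π^2/8) := by
  have hz : HasSum (fun n : ℕ => ((n:ℝ)^2)⁻¹) (π^2/6) := by
    simpa [one_div] using hasSum_zeta_two
  have he : HasSum (fun k : ℕ => (((2*(k:ℕ) : ℕ):ℝ)^2)⁻¹) (π^2/24) := by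
    have h4 := hz.mul_left (4⁻¹ : ℝ)
    have heq : (fun k : ℕ => (((2*(k:ℕ) : ℕ):ℝ)^2)⁻¹) = fun k : ℕ => 4⁻¹ * ((k:ℝ)^2)⁻¹ := by
      funext k; push_cast; rw [mul_pow, mul_inv]; norm_num
    rw [heq]
    rw [show (π^2/24 : ℝ) = 4⁻¹ * (π^2/6) by ring]; exact h4
  have ho : HasSum (fun k : ℕ => (((2*(k:ℕ)+1 : ℕ):ℝ)^2)⁻¹) (∑' k : ℕ, ((2*(k:ℝ)+1)^2)⁻¹) := by
    refine (summable_oddsq_nat.hasSum).congr_fun fun k => ?_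
    push_cast; ring_nf
  have htot := HasSum.even_add_odd (f := fun n : ℕ => ((n:ℝ)^2)⁻¹) he ho
  have heq2 := hz.unique htot
  have h8 : (∑' k : ℕ, ((2*(k:ℝ)+1)^2)⁻¹) = π^2/8 := by linarith
  rw [h8] at ho
  refine ho.congr_fun fun k => by push_cast; ring_nf

lemma summable_part1 : Summable (fun n : ℕ => ((2*(n:ℝ)-1) ^ 2)⁻¹) := by
  rw [← summable_nat_add_iff 1]
  refine summable_oddsq_nat.congr fun k => ?_
  push_cast; ring_nf

lemma summable_part2 : Summable (fun n : ℕ => ((2*(n:ℝ)+3) ^ 2)⁻¹) := by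
  have := (summable_nat_add_iff 1).mpr summable_oddsq_nat
  refine this.congr fun k => ?_
  push_cast; ring_nf

lemma summable_oddsq_int : Summable (fun n : ℤ => ((2*(n:ℝ)-1) ^ 2)⁻¹) := by
  refine Summable.of_nat_of_neg_add_one (summable_part1.congr fun n => by push_cast; ring_nf) ?_
  refine (summable_part2.congr fun n => ?_)
  push_cast; ring_nf

lemma tsum_oddsq_int : ∑' n : ℤ, ((2*(n:ℝ)-1) ^ 2)⁻¹ = π^2/4 := by
  rw [tsum_of_nat_of_neg_add_one
    (summable_part1.congr fun n => by push_cast; ring_nf)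
    (summable_part2.congr fun n => by push_cast; ring_nf)]
  have hA := hasSum_oddsq.tsum_eq
  have hshift : ∑' k : ℕ, ((2*(k:ℝ)+1) ^ 2)⁻¹
      = ((2*(0:ℝ)+1) ^ 2)⁻¹ + ∑' k : ℕ, ((2*((k:ℝ)+1)+1) ^ 2)⁻¹ := by
    rw [Summable.tsum_eq_zero_add summable_oddsq_nat]
    norm_num
  have h1 : ∑' n : ℕ, ((2*((n:ℤ):ℝ)-1) ^ 2)⁻¹ = 1 + π^2/8 := by
    have e1 : ∑' n : ℕ, ((2*((n:ℤ):ℝ)-1) ^ 2)⁻¹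
        = ∑' n : ℕ, ((2*(n:ℝ)-1) ^ 2)⁻¹ := tsum_congr fun n => by push_cast; ring_nf
    rw [e1, Summable.tsum_eq_zero_add summable_part1]
    have e2 : ∑' n : ℕ, ((2*((n:ℝ)+1)-1) ^ 2)⁻¹ = ∑' k : ℕ, ((2*(k:ℝ)+1) ^ 2)⁻¹ :=
      tsum_congr fun n => by ring_nf
    push_cast
    rw [e2, hA]; norm_num
  have h2 : ∑' n : ℕ, ((2*((-((n:ℕ)+1) : ℤ):ℝ)-1) ^ 2)⁻¹ = π^2/8 - 1 := by
    have e1 : ∑' n : ℕ, ((2*((-((n:ℕ)+1) : ℤ):ℝ)-1) ^ 2)⁻¹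
        = ∑' k : ℕ, ((2*((k:ℝ)+1)+1) ^ 2)⁻¹ := tsum_congr fun n => by push_cast; ring_nf
    rw [e1]
    have : ∑' k : ℕ, ((2*((k:ℝ)+1)+1) ^ 2)⁻¹ = π^2/8 - ((2*(0:ℝ)+1) ^ 2)⁻¹ := by
      rw [hA] at hshift; linarith [hshift]
    rw [this]; norm_num
  rw [h1, h2]; ring

lemma kolF_rep (x : ℝ) (hx : 0 < x) :
    kolF x = Real.sqrt (π/2) / x * ∑' n : ℤ, rexp (-(π^2 * (2*(n:ℝ)-1)^2) / (8*x^2)) := by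
  have hπ := Real.pi_pos
  set a : ℝ := 2*x^2/π with ha_def
  have ha : 0 < a := by positivity
  have key := Complex.tsum_exp_neg_quadratic (a := (a:ℂ)) (by simpa using ha) (Complex.I/2)
  have hL : ∀ n : ℤ, Complex.exp (-↑π * (a:ℂ) * (n:ℂ)^2 + 2*↑π*(Complex.I/2)*(n:ℂ))
      = ((((-1:ℝ)^n * rexp (-2*(n:ℝ)^2*x^2)) : ℝ) : ℂ) := by
    intro n
    have hr : -2*(n:ℝ)^2*x^2 = -π * a * (n:ℝ)^2 := by
      rw [ha_def]; field_simp
    have h1 : (-↑π * (a:ℂ) * (n:ℂ)^2) = ((-2*(n:ℝ)^2*x^2 : ℝ) : ℂ) := by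
      rw [hr]; push_cast; ring
    have h2 : (2*(π:ℂ)*(Complex.I/2)*(n:ℂ)) = (n:ℂ) * (↑π * Complex.I) := by ring
    rw [Complex.exp_add, h1, h2, Complex.exp_int_mul, Complex.exp_pi_mul_I,
      ← Complex.ofReal_exp]
    push_cast
    ring
  have hR : ∀ n : ℤ, Complex.exp (-↑π / (a:ℂ) * ((n:ℂ) + Complex.I * (Complex.I/2))^2)
      = ((rexp (-(π^2 * (2*(n:ℝ)-1)^2) / (8*x^2)) : ℝ) : ℂ) := by
    intro n
    have hb : ((n:ℂ) + Complex.I * (Complex.I/2)) = (((2*(n:ℝ)-1)/2 : ℝ) : ℂ) := by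
      have : Complex.I * (Complex.I/2) = -1/2 := by
        rw [mul_div_assoc', Complex.I_mul_I]
      rw [this]; push_cast; ring
    have harg : (-↑π / (a:ℂ) * ((n:ℂ) + Complex.I * (Complex.I/2))^2)
        = ((-(π^2 * (2*(n:ℝ)-1)^2) / (8*x^2) : ℝ) : ℂ) := by
      have hr : -(π^2 * (2*(n:ℝ)-1)^2) / (8*x^2) = -π/a * ((2*(n:ℝ)-1)/2)^2 := by
        rw [ha_def]; field_simp; ring
      rw [hb, hr]; push_cast; ring
    rw [harg, ← Complex.ofReal_exp]
  have hsqrt : Real.sqrt (π/2) * Real.sqrt a = x := by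
    rw [← Real.sqrt_mul (by positivity)]
    have : π/2 * a = x^2 := by rw [ha_def]; field_simp
    rw [this, Real.sqrt_sq hx.le]
  have hsa : Real.sqrt a ≠ 0 := by positivity
  have hpre : 1/(a:ℂ)^((1:ℂ)/2) = ((Real.sqrt (π/2)/x : ℝ) : ℂ) := by
    rw [show ((1:ℂ)/2) = ((1/2 : ℝ) : ℂ) by norm_num, ← Complex.ofReal_cpow ha.le,
      ← Real.sqrt_eq_rpow, show (1:ℂ) = ((1:ℝ):ℂ) from rfl, ← Complex.ofReal_div]
    norm_cast
    rw [div_eq_div_iff hsa (ne_of_gt hx)]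
    linarith [hsqrt]
  have final : ((kolF x : ℝ) : ℂ)
      = ((Real.sqrt (π/2) / x * ∑' n : ℤ, rexp (-(π^2 * (2*(n:ℝ)-1)^2) / (8*x^2)) : ℝ) : ℂ) := by
    rw [kolF, Complex.ofReal_tsum]
    calc ∑' m : ℤ, (((-1:ℝ)^m * rexp (-2 * (m:ℝ)^2 * x^2) : ℝ) : ℂ)
        = ∑' n : ℤ, Complex.exp (-↑π * (a:ℂ) * (n:ℂ)^2 + 2*↑π*(Complex.I/2)*(n:ℂ)) := by
          refine tsum_congr fun n => ?_
          rw [hL n]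
      _ = 1 / (a:ℂ)^((1:ℂ)/2) * ∑' n : ℤ, Complex.exp (-↑π / (a:ℂ) * ((n:ℂ) + Complex.I * (Complex.I/2))^2) := key
      _ = _ := by
          rw [hpre, Complex.ofReal_mul, Complex.ofReal_tsum]
          congr 1
          exact tsum_congr fun n => hR n
  exact_mod_cast final

lemma int_exp_Ioi {c : ℝ} (hc : 0 < c) : ∫ t in Ioi (0:ℝ), rexp (-(c*t)) = c⁻¹ := by
  have := integral_comp_mul_left_Ioi (fun u => rexp (-u)) 0 hc
  simp only [mul_zero, smul_eq_mul] at this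
  rw [this, integral_exp_neg_Ioi_zero, mul_one]

lemma density_rep {h : ℝ} (hh : 0 < h) {t : ℝ} (ht : 0 < t) :
    kolF (h / Real.sqrt t) / (h * Real.sqrt (2*π*t))
      = (2*h^2)⁻¹ * ∑' n : ℤ, rexp (-(π^2 * (2*(n:ℝ)-1)^2 / (8*h^2) * t)) := by
  have hπ := Real.pi_pos
  have hst : 0 < Real.sqrt t := Real.sqrt_pos.mpr ht
  have hx : 0 < h / Real.sqrt t := div_pos hh hst
  have hx2 : (h / Real.sqrt t)^2 = h^2/t := by
    rw [div_pow, Real.sq_sqrt ht.le]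
  rw [kolF_rep _ hx]
  have hterm : ∀ n : ℤ, rexp (-(π^2 * (2*(n:ℝ)-1)^2) / (8*(h / Real.sqrt t)^2))
      = rexp (-(π^2 * (2*(n:ℝ)-1)^2 / (8*h^2) * t)) := by
    intro n
    congr 1
    rw [hx2]; field_simp
  rw [tsum_congr hterm]
  have e1 : Real.sqrt (2*π*t) = Real.sqrt (2*π) * Real.sqrt t := Real.sqrt_mul (by positivity) t
  have e2 : Real.sqrt (2*π) = 2 * Real.sqrt (π/2) := by
    rw [show 2*π = 2^2*(π/2) by ring, Real.sqrt_mul (by norm_num), Real.sqrt_sq (by norm_num)]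
  have hsp : 0 < Real.sqrt (π/2) := Real.sqrt_pos.mpr (by positivity)
  rw [e1, e2, div_eq_iff (by positivity)]
  field_simp
  exact tsum_congr fun n => by ring_nf


/-- `t ↦ F(h/√t)/(h√(2πt))` is a probability density on `(0,∞)`. -/
theorem stmt_14 (h : ℝ) (hh : 0 < h) :
    (∀ t : ℝ, 0 < t → 0 ≤ kolF (h / Real.sqrt t) / (h * Real.sqrt (2 * π * t))) ∧
      ∫ t in Set.Ioi (0 : ℝ), kolF (h / Real.sqrt t) / (h * Real.sqrt (2 * π * t)) = 1 := by
  have hπ := Real.pi_pos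
  set c : ℤ → ℝ := fun n => π^2 * (2*(n:ℝ)-1)^2 / (8*h^2) with hc_def
  have hc : ∀ n : ℤ, 0 < c n := by
    intro n
    have h21 : (2*(n:ℝ)-1) ≠ 0 := by
      have h0 : ((2*n-1 : ℤ) : ℝ) ≠ 0 := Int.cast_ne_zero.mpr (by omega)
      push_cast at h0; exact h0
    positivity
  constructor
  · intro t ht
    rw [density_rep hh ht]
    exact mul_nonneg (by positivity) (tsum_nonneg fun n => (Real.exp_pos _).le)
  · have hint : ∀ n : ℤ, IntegrableOn (fun t => rexp (-(c n * t))) (Ioi (0:ℝ)) := by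
      intro n; simpa [neg_mul] using exp_neg_integrableOn_Ioi 0 (hc n)
    have hval : ∀ n : ℤ, ∫ t in Ioi (0:ℝ), rexp (-(c n * t)) = (c n)⁻¹ :=
      fun n => int_exp_Ioi (hc n)
    have hsum : Summable (fun n : ℤ => (c n)⁻¹) := by
      have := summable_oddsq_int.mul_left (8*h^2/π^2)
      refine this.congr fun n => ?_
      rw [hc_def]; field_simp
    have congr_step : ∫ t in Ioi (0:ℝ), kolF (h / Real.sqrt t) / (h * Real.sqrt (2*π*t))
        = ∫ t in Ioi (0:ℝ), (2*h^2)⁻¹ * ∑' n : ℤ, rexp (-(c n * t)) := by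
      refine setIntegral_congr_fun measurableSet_Ioi fun t ht => ?_
      exact density_rep hh ht
    have hsum_norm : Summable (fun n : ℤ => ∫ t in Ioi (0:ℝ), ‖rexp (-(c n * t))‖) := by
      refine hsum.congr fun n => ?_
      rw [← hval n]
      refine setIntegral_congr_fun measurableSet_Ioi fun t _ => ?_
      exact (Real.norm_of_nonneg (Real.exp_pos _).le).symm
    have swap := MeasureTheory.integral_tsum_of_summable_integral_norm
      (μ := volume.restrict (Ioi 0)) (F := fun (n : ℤ) (t : ℝ) => rexp (-(c n * t)))
      (fun n => hint n) hsum_norm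
    rw [congr_step, MeasureTheory.integral_const_mul, ← swap]
    have htsum : ∑' n : ℤ, ∫ t in Ioi (0:ℝ), rexp (-(c n * t)) = 2*h^2 := by
      rw [tsum_congr fun n => hval n]
      have e : ∀ n : ℤ, (c n)⁻¹ = (8*h^2/π^2) * ((2*(n:ℝ)-1)^2)⁻¹ := by
        intro n; rw [hc_def]; field_simp
      rw [tsum_congr e, tsum_mul_left, tsum_oddsq_int]
      field_simp
      ring
    rw [htsum]
    field_simp
end
end
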